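/- Let A and B be strict bicategories, and let F : B → A and U : A → B be strict 2-functors equipped with 2-natural transformations η (with components η_b : b ⟶ U.obj (F.obj b)) and ε (with components ε_a : F.obj (U.obj a) ⟶ a) satisfying the triangle identities F.map η_b ≫ ε_{F.obj b} = 𝟙 (F.obj b) and η_{U.obj a} ≫ U.map ε_a = 𝟙 (U.obj a), so that F ⊣ U is a 2-adjunction. If (r, ρ) is an absolute right lifting of a 1-cell g : c ⟶ a' through a 1-cell f : b' ⟶ a' in A, then (U.map r, U.map₂ ρ) is an absolute right lifting of U.map g through U.map f in B, where U.map₂ ρ is regarded as a 2-cell U.map r ≫ U.map f ⟶ U.map g via the strictness equality U.map (r ≫ f) = U.map r ≫ U.map f. That is, right 2-adjoint strict 2-functors preserve absolute right lifting diagrams. -/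

import Mathlib

open CategoryTheory Bicategory

universe w₁ w₂ w₃ v₁ v₂ v₃ u₁ u₂ u₃

/-- A strict 2-functor between strict bicategories is a pseudofunctor which preserves
identity 1-cells and composition of 1-cells strictly, and whose coherence isomorphisms
are the `eqToIso`s of these equalities. -/
structure StrictTwoFunctor (B : Type u₁) (A : Type u₂) [Bicategory.{w₁, v₁} B]
    [Bicategory.{w₂, v₂} A] [Bicategory.Strict B] [Bicategory.Strict A] extends
    CategoryTheory.Pseudofunctor B A where
  map_id' : ∀ x : B, toPseudofunctor.map (𝟙 x) = 𝟙 (toPseudofunctor.obj x)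
  map_comp' : ∀ {x y z : B} (f : x ⟶ y) (g : y ⟶ z),
    toPseudofunctor.map (f ≫ g) = toPseudofunctor.map f ≫ toPseudofunctor.map g
  mapId_eq : ∀ x : B, toPseudofunctor.mapId x = eqToIso (map_id' x)
  mapComp_eq : ∀ {x y z : B} (f : x ⟶ y) (g : y ⟶ z),
    toPseudofunctor.mapComp f g = eqToIso (map_comp' f g)

namespace StrictTwoFunctor

variable {B : Type u₁} {A : Type u₂} {C : Type u₃} [Bicategory.{w₁, v₁} B]
  [Bicategory.{w₂, v₂} A] [Bicategory.{w₃, v₃} C]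
  [Bicategory.Strict B] [Bicategory.Strict A] [Bicategory.Strict C]

theorem map₂_eqToHom (F : StrictTwoFunctor B A) {x y : B} {f g : x ⟶ y} (h : f = g) :
    F.map₂ (eqToHom h) = eqToHom (congrArg F.map h) := by
  subst h; simp

/-- The identity strict 2-functor. -/
def id (B : Type u₁) [Bicategory.{w₁, v₁} B] [Bicategory.Strict B] :
    StrictTwoFunctor B B where
  toPseudofunctor := Pseudofunctor.id B
  map_id' _ := rfl
  map_comp' _ _ := rfl
  mapId_eq _ := by aesop_cat
  mapComp_eq _ _ := by aesop_cat

/-- Composition of strict 2-functors. -/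
def comp (F : StrictTwoFunctor B A) (G : StrictTwoFunctor A C) : StrictTwoFunctor B C where
  toPseudofunctor := F.toPseudofunctor.comp G.toPseudofunctor
  map_id' x := by
    simp [Pseudofunctor.comp, PrelaxFunctor.comp, PrelaxFunctorStruct.comp, F.map_id', G.map_id'] <;> rfl
  map_comp' f g := by
    simp [Pseudofunctor.comp, PrelaxFunctor.comp, PrelaxFunctorStruct.comp, F.map_comp', G.map_comp'] <;> rfl
  mapId_eq x := by
    ext
    change G.map₂ (F.mapId x).hom ≫ (G.mapId (F.obj x)).hom = _
    simp [Pseudofunctor.comp, F.mapId_eq, G.mapId_eq, G.map₂_eqToHom]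
    rfl
  mapComp_eq f g := by
    ext
    change G.map₂ (F.mapComp f g).hom ≫ (G.mapComp (F.map f) (F.map g)).hom = _
    simp [Pseudofunctor.comp, F.mapComp_eq, G.mapComp_eq, G.map₂_eqToHom]
    rfl

end StrictTwoFunctor

/-- A 2-natural transformation between strict 2-functors. -/
structure TwoNatTrans {B : Type u₁} {A : Type u₂} [Bicategory.{w₁, v₁} B]
    [Bicategory.{w₂, v₂} A] [Bicategory.Strict B] [Bicategory.Strict A]
    (F G : StrictTwoFunctor B A) where
  app : ∀ x : B, F.obj x ⟶ G.obj x
  naturality : ∀ {x y : B} (f : x ⟶ y), F.map f ≫ app y = app x ≫ G.map f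
  naturality₂ : ∀ {x y : B} {f g : x ⟶ y} (θ : f ⟶ g),
    (F.map₂ θ ▷ app y) ≫ eqToHom (naturality g) = eqToHom (naturality f) ≫ (app x ◁ G.map₂ θ)

/-- In a strict bicategory `K`, the pair `(r, ρ)` is an absolute right lifting of `g` through
`f` if every 2-cell `χ : b' ≫ f ⟶ c' ≫ g` factors uniquely through `ρ`. -/
def IsAbsoluteRightLifting {K : Type u₁} [Bicategory.{w₁, v₁} K] [Bicategory.Strict K]
    {a b c : K} (f : b ⟶ a) (g : c ⟶ a) (r : c ⟶ b) (ρ : r ≫ f ⟶ g) : Prop :=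
  ∀ (x : K) (b' : x ⟶ b) (c' : x ⟶ c) (χ : b' ≫ f ⟶ c' ≫ g),
    ∃! ζ : b' ⟶ c' ≫ r,
      χ = (ζ ▷ f) ≫ eqToHom (Bicategory.Strict.assoc c' r f) ≫ (c' ◁ ρ)

variable {B : Type u₁} {A : Type u₂} [Bicategory.{w₁, v₁} B] [Bicategory.{w₂, v₂} A]
  [Bicategory.Strict B] [Bicategory.Strict A]

/-! A 2-adjunction `F ⊣ U` identifies, for `s t : x ⟶ U a`, the 2-cells `s ⟶ t` with the
2-cells between the transposes `F s ≫ ε a ⟶ F t ≫ ε a`, via `θ ↦ F θ ▷ ε a` with inverse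
`φ ↦ η x ◁ U φ` (the triangle identities make these mutually inverse). By 2-naturality of `ε`
this identification commutes with whiskering, so it carries factorisations through `U ρ` to
factorisations through `ρ`, and the universal property of `(r, ρ)` at the transposed data
transfers back along it. -/

section

variable {K : Type u₃} [Bicategory.{w₃, v₃} K]

theorem whiskerRight_eq_of_eq {a b c : K} {f g : a ⟶ b} (θ : f ⟶ g) {k k' : b ⟶ c}
    (h : k = k') :
    θ ▷ k = eqToHom (congrArg (f ≫ ·) h) ≫ θ ▷ k' ≫ eqToHom (congrArg (g ≫ ·) h).symm := by
  subst h; simp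

theorem whiskerLeft_eq_of_eq {a b c : K} {k k' : a ⟶ b} (h : k = k') {f g : b ⟶ c}
    (θ : f ⟶ g) :
    k ◁ θ = eqToHom (congrArg (· ≫ f) h) ≫ k' ◁ θ ≫ eqToHom (congrArg (· ≫ g) h).symm := by
  subst h; simp

end

namespace StrictTwoFunctor

theorem map₂_whiskerLeft (F : StrictTwoFunctor B A) {x y z : B} (f : x ⟶ y) {g h : y ⟶ z}
    (θ : g ⟶ h) :
    F.map₂ (f ◁ θ) =
      eqToHom (F.map_comp' f g) ≫ (F.map f ◁ F.map₂ θ) ≫ eqToHom (F.map_comp' f h).symm := by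
  simp [F.mapComp_eq]

theorem map₂_whiskerRight (F : StrictTwoFunctor B A) {x y z : B} {f g : x ⟶ y} (θ : f ⟶ g)
    (h : y ⟶ z) :
    F.map₂ (θ ▷ h) =
      eqToHom (F.map_comp' f h) ≫ (F.map₂ θ ▷ F.map h) ≫ eqToHom (F.map_comp' g h).symm := by
  simp [F.mapComp_eq]

end StrictTwoFunctor

namespace TwoNatTrans

variable {F : StrictTwoFunctor B A} {U : StrictTwoFunctor A B}
  (η : TwoNatTrans (StrictTwoFunctor.id B) (F.comp U))
  (ε' : TwoNatTrans (U.comp F) (StrictTwoFunctor.id A))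

/- `η.app` and `ε'.app` with their types in normal form: `rw` does not see through the
`StrictTwoFunctor.id` and `StrictTwoFunctor.comp` in the types of the components. -/
def unitApp (x : B) : x ⟶ U.obj (F.obj x) := η.app x

def counitApp (a : A) : F.obj (U.obj a) ⟶ a := ε'.app a

theorem unitApp_naturality {x y : B} (s : x ⟶ y) :
    s ≫ η.unitApp y = η.unitApp x ≫ U.map (F.map s) :=
  η.naturality s

theorem counitApp_naturality {a₁ a₂ : A} (k : a₁ ⟶ a₂) :
    F.map (U.map k) ≫ ε'.counitApp a₂ = ε'.counitApp a₁ ≫ k :=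
  ε'.naturality k

theorem unitApp_naturality₂ {x y : B} {s t : x ⟶ y} (θ : s ⟶ t) :
    η.unitApp x ◁ U.map₂ (F.map₂ θ) =
      eqToHom (η.unitApp_naturality s).symm ≫ (θ ▷ η.unitApp y) ≫
        eqToHom (η.unitApp_naturality t) :=
  (eqToHom_comp_iff _ _ _).mp (η.naturality₂ θ).symm

theorem counitApp_naturality₂ {a₁ a₂ : A} {k l : a₁ ⟶ a₂} (θ : k ⟶ l) :
    F.map₂ (U.map₂ θ) ▷ ε'.counitApp a₂ =
      eqToHom (ε'.counitApp_naturality k) ≫ (ε'.counitApp a₁ ◁ θ) ≫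
        eqToHom (ε'.counitApp_naturality l).symm := by
  rw [← Category.assoc]
  exact (comp_eqToHom_iff _ _ _).mp (ε'.naturality₂ θ)

theorem map_comp_counitApp {x : B} {a₁ a₂ : A} (s : x ⟶ U.obj a₁) (k : a₁ ⟶ a₂) :
    F.map (s ≫ U.map k) ≫ ε'.counitApp a₂ = (F.map s ≫ ε'.counitApp a₁) ≫ k := by
  rw [F.map_comp', Category.assoc, counitApp_naturality, Category.assoc]

theorem map₂_whiskerRight_map_whiskerRight_counitApp {x : B} {a₁ a₂ : A} {s t : x ⟶ U.obj a₁}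
    (θ : s ⟶ t) (k : a₁ ⟶ a₂) :
    F.map₂ (θ ▷ U.map k) ▷ ε'.counitApp a₂ =
      eqToHom (ε'.map_comp_counitApp s k) ≫ (F.map₂ θ ▷ ε'.counitApp a₁) ▷ k ≫
        eqToHom (ε'.map_comp_counitApp t k).symm := by
  rw [F.map₂_whiskerRight, comp_whiskerRight, comp_whiskerRight, whiskerRight_comp_symm,
    whiskerRight_eq_of_eq _ (ε'.counitApp_naturality k), whiskerRight_comp]
  simp [Bicategory.Strict.associator_eqToIso]

theorem map₂_whiskerLeft_map₂_whiskerRight_counitApp {x : B} {a₁ a₂ : A} (q : x ⟶ U.obj a₁)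
    {k l : a₁ ⟶ a₂} (θ : k ⟶ l) :
    F.map₂ (q ◁ U.map₂ θ) ▷ ε'.counitApp a₂ =
      eqToHom (ε'.map_comp_counitApp q k) ≫ (F.map q ≫ ε'.counitApp a₁) ◁ θ ≫
        eqToHom (ε'.map_comp_counitApp q l).symm := by
  rw [F.map₂_whiskerLeft, comp_whiskerRight, comp_whiskerRight, whisker_assoc,
    counitApp_naturality₂, whiskerLeft_comp, whiskerLeft_comp, comp_whiskerLeft_symm]
  simp [Bicategory.Strict.associator_eqToIso]

end TwoNatTrans

section TwoAdjunction

variable {F : StrictTwoFunctor B A} {U : StrictTwoFunctor A B}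
  (η : TwoNatTrans (StrictTwoFunctor.id B) (F.comp U))
  (ε' : TwoNatTrans (U.comp F) (StrictTwoFunctor.id A))
  (triangle_F : ∀ b : B, F.map (η.unitApp b) ≫ ε'.counitApp (F.obj b) = 𝟙 (F.obj b))
  (triangle_U : ∀ a : A, η.unitApp (U.obj a) ≫ U.map (ε'.counitApp a) = 𝟙 (U.obj a))

include triangle_U in
theorem unitApp_comp_map_map_comp_counitApp {x : B} {a : A} (s : x ⟶ U.obj a) :
    η.unitApp x ≫ U.map (F.map s ≫ ε'.counitApp a) = s := by
  rw [U.map_comp', ← Category.assoc, ← TwoNatTrans.unitApp_naturality, Category.assoc,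
    triangle_U, Category.comp_id]

def transpose₂Equiv {x : B} {a : A} (s t : x ⟶ U.obj a) :
    (s ⟶ t) ≃ (F.map s ≫ ε'.counitApp a ⟶ F.map t ≫ ε'.counitApp a) where
  toFun θ := F.map₂ θ ▷ ε'.counitApp a
  invFun φ := eqToHom (unitApp_comp_map_map_comp_counitApp η ε' triangle_U s).symm ≫
    (η.unitApp x ◁ U.map₂ φ) ≫ eqToHom (unitApp_comp_map_map_comp_counitApp η ε' triangle_U t)
  left_inv θ := by
    dsimp only
    rw [U.map₂_whiskerRight, whiskerLeft_comp, whiskerLeft_comp, whisker_assoc_symm,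
      TwoNatTrans.unitApp_naturality₂, comp_whiskerRight, comp_whiskerRight,
      whiskerRight_comp_symm, whiskerRight_eq_of_eq θ (triangle_U a)]
    simp [Bicategory.Strict.associator_eqToIso, Bicategory.Strict.rightUnitor_eqToIso]
  right_inv φ := by
    dsimp only
    rw [F.map₂_comp, F.map₂_comp, F.map₂_whiskerLeft, comp_whiskerRight, comp_whiskerRight,
      comp_whiskerRight, comp_whiskerRight, whisker_assoc, TwoNatTrans.counitApp_naturality₂,
      whiskerLeft_comp, whiskerLeft_comp, comp_whiskerLeft_symm,
      whiskerLeft_eq_of_eq (triangle_F x) φ]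
    simp [Bicategory.Strict.associator_eqToIso, Bicategory.Strict.leftUnitor_eqToIso,
      StrictTwoFunctor.map₂_eqToHom]

end TwoAdjunction

/-- Right 2-adjoint strict 2-functors preserve absolute right lifting diagrams: if `F ⊣ U`
is a 2-adjunction (given by 2-natural transformations `η`, `ε` satisfying the triangle
identities) and `(r, ρ)` is an absolute right lifting of `g` through `f` in `A`, then
`(U.map r, U.map₂ ρ)` is an absolute right lifting of `U.map g` through `U.map f` in `B`. -/
theorem rightTwoAdjoint_preserves_absoluteRightLifting
    (F : StrictTwoFunctor B A) (U : StrictTwoFunctor A B)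
    (η : TwoNatTrans (StrictTwoFunctor.id B) (F.comp U))
    (ε' : TwoNatTrans (U.comp F) (StrictTwoFunctor.id A))
    (triangle_F : ∀ b : B, F.map (η.app b) ≫ ε'.app (F.obj b) = 𝟙 (F.obj b))
    (triangle_U : ∀ a : A, η.app (U.obj a) ≫ U.map (ε'.app a) = 𝟙 (U.obj a))
    {a' b' c : A} (f : b' ⟶ a') (g : c ⟶ a') (r : c ⟶ b') (ρ : r ≫ f ⟶ g)
    (h : IsAbsoluteRightLifting f g r ρ) :
    IsAbsoluteRightLifting (U.map f) (U.map g) (U.map r)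
      (eqToHom (U.map_comp' r f).symm ≫ U.map₂ ρ) := by
  intro x p q χ
  let transposeζ := (transpose₂Equiv η ε' triangle_F triangle_U p (q ≫ U.map r)).trans
    (Iso.homCongr (Iso.refl _) (eqToIso (ε'.map_comp_counitApp q r)))
  let transposeχ :=
    (transpose₂Equiv η ε' triangle_F triangle_U (p ≫ U.map f) (q ≫ U.map g)).trans
    (Iso.homCongr (eqToIso (ε'.map_comp_counitApp p f)) (eqToIso (ε'.map_comp_counitApp q g)))
  refine (transposeζ.existsUnique_congr fun ζ => ?_).mpr (h _ _ _ (transposeχ χ))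
  rw [← transposeχ.apply_eq_iff_eq]
  simp only [transposeζ, transposeχ, Equiv.trans_apply, Iso.homCongr_apply, transpose₂Equiv,
    Equiv.coe_fn_mk, F.map₂_comp, comp_whiskerRight, whiskerLeft_comp,
    ε'.map₂_whiskerRight_map_whiskerRight_counitApp,
    ε'.map₂_whiskerLeft_map₂_whiskerRight_counitApp]
  simp [StrictTwoFunctor.map₂_eqToHom]
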